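/- arXiv:1410.1390 — 5 statements merged into one kernel-verified Lean document; each statement's English description precedes it below -/
import Mathlib

section
/- (Inequality (2.35)–(2.36) in the proof of Theorem 2.2) Let the sequences {x_k^t}, {x_0^t}, {y_k^t} be generated by the classical ADMM (Algorithm 1) for the consensus problem, with ∇g_k Lipschitz continuous with constant L_k > 0. Then for every t ≥ 1 and every k = 1,…,K: ρ_k ‖x_k^{t+1} − x_0^{t+1}‖ = ‖y_k^{t+1} − y_k^t‖ ≤ L_k ‖x_k^{t+1} − x_k^t‖, and consequently Σ_{k=1}^K ‖x_k^{t+1} − x_0^{t+1}‖ ≤ Σ_{k=1}^K (L_k/ρ_k) ‖x_k^{t+1} − x_k^t‖. -/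
open Filter
open scoped RealInnerProductSpace BigOperators

/-- Augmented Lagrangian for the reformulated consensus problem. -/
noncomputable def augL {N K : ℕ} (g : Fin K → EuclideanSpace ℝ (Fin N) → ℝ)
    (h : EuclideanSpace ℝ (Fin N) → ℝ) (ρ : Fin K → ℝ)
    (xk : Fin K → EuclideanSpace ℝ (Fin N)) (x0 : EuclideanSpace ℝ (Fin N))
    (y : Fin K → EuclideanSpace ℝ (Fin N)) : ℝ :=
  (∑ k, g k (xk k)) + h x0 + (∑ k, ⟪y k, xk k - x0⟫)
    + ∑ k, ρ k / 2 * ‖xk k - x0‖ ^ 2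

lemma foc_consensus {F : Type*} [NormedAddCommGroup F] [InnerProductSpace ℝ F]
    [CompleteSpace F] (g : F → ℝ) (g' yv c a : F) (ρ : ℝ)
    (hg : HasGradientAt g g' a)
    (hmin : ∀ z, g a + ⟪yv, a - c⟫ + ρ / 2 * ‖a - c‖ ^ 2
      ≤ g z + ⟪yv, z - c⟫ + ρ / 2 * ‖z - c‖ ^ 2) :
    yv + ρ • (a - c) = -g' := by
  have h2 : HasFDerivAt (fun z : F => z - c) (ContinuousLinearMap.id ℝ F) a :=
    (hasFDerivAt_id a).sub_const c
  have h3 := (hasFDerivAt_const yv a).inner ℝ h2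
  have h4 := h2.inner ℝ h2
  have h1 := hg.hasFDerivAt
  have hD := (h1.add h3).add (h4.const_mul (ρ / 2))
  have heq : (fun z : F => g z + ⟪yv, z - c⟫ + ρ / 2 * ‖z - c‖ ^ 2)
      =ᶠ[nhds a] (fun z : F => g z + ⟪yv, z - c⟫ + ρ / 2 * ⟪z - c, z - c⟫) :=
    Eventually.of_forall fun z => by simp [real_inner_self_eq_norm_sq]
  have hphi := hD.congr_of_eventuallyEq heq
  have hloc : IsLocalMin (fun z : F => g z + ⟪yv, z - c⟫ + ρ / 2 * ‖z - c‖ ^ 2) a :=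
    Eventually.of_forall hmin
  have h0 := hloc.hasFDerivAt_eq_zero hphi
  have key : ∀ v : F, ⟪g' + yv + ρ • (a - c), v⟫ = 0 := by
    intro v
    have hv := congrFun (congrArg DFunLike.coe h0) v
    simp [fderivInnerCLM_apply, InnerProductSpace.toDual_apply_apply, inner_add_left,
      real_inner_smul_left, real_inner_smul_right, real_inner_comm] at hv ⊢
    linarith
  have hz : g' + yv + ρ • (a - c) = 0 :=
    inner_self_eq_zero.mp (key _)
  rw [← sub_eq_zero]; rw [← hz]; abel

/-- **Inequalities (2.35)–(2.36)** in the proof of Theorem 2.2.  For the classical ADMM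
(Algorithm 1) on the consensus problem, for every `t ≥ 1` and `k`:
`ρ_k‖x_k^{t+1} − x_0^{t+1}‖ = ‖y_k^{t+1} − y_k^t‖ ≤ L_k‖x_k^{t+1} − x_k^t‖`, and hence
`Σ_k ‖x_k^{t+1} − x_0^{t+1}‖ ≤ Σ_k (L_k/ρ_k)‖x_k^{t+1} − x_k^t‖`. -/
theorem ineq2_35_36
    {N K : ℕ} (hK : 1 ≤ K)
    (g : Fin K → EuclideanSpace ℝ (Fin N) → ℝ)
    (g' : Fin K → EuclideanSpace ℝ (Fin N) → EuclideanSpace ℝ (Fin N))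
    (h : EuclideanSpace ℝ (Fin N) → ℝ)
    (X : Set (EuclideanSpace ℝ (Fin N)))
    (Lg ρ : Fin K → ℝ)
    (x : ℕ → Fin K → EuclideanSpace ℝ (Fin N))
    (x0 : ℕ → EuclideanSpace ℝ (Fin N))
    (y : ℕ → Fin K → EuclideanSpace ℝ (Fin N))
    -- data assumptions
    (hgrad : ∀ k z, HasGradientAt (g k) (g' k z) z)
    (hLpos : ∀ k, 0 < Lg k)
    (hLip : ∀ k u v, ‖g' k u - g' k v‖ ≤ Lg k * ‖u - v‖)
    (hconv : ConvexOn ℝ Set.univ h)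
    (hXne : X.Nonempty) (hXcl : IsClosed X) (hXcv : Convex ℝ X)
    (hρ : ∀ k, 0 < ρ k)
    -- Algorithm 1 (classical ADMM)
    (hx0upd : ∀ t : ℕ, x0 (t + 1) ∈ X ∧ ∀ z ∈ X,
      augL g h ρ (x t) (x0 (t + 1)) (y t) ≤ augL g h ρ (x t) z (y t))
    (hxupd : ∀ (t : ℕ) (k : Fin K) (z : EuclideanSpace ℝ (Fin N)),
      g k (x (t + 1) k) + ⟪y t k, x (t + 1) k - x0 (t + 1)⟫
          + ρ k / 2 * ‖x (t + 1) k - x0 (t + 1)‖ ^ 2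
        ≤ g k z + ⟪y t k, z - x0 (t + 1)⟫ + ρ k / 2 * ‖z - x0 (t + 1)‖ ^ 2)
    (hyupd : ∀ (t : ℕ) (k : Fin K),
      y (t + 1) k = y t k + ρ k • (x (t + 1) k - x0 (t + 1))) :
    ∀ t : ℕ, 1 ≤ t →
      (∀ k : Fin K,
        ρ k * ‖x (t + 1) k - x0 (t + 1)‖ = ‖y (t + 1) k - y t k‖ ∧
        ‖y (t + 1) k - y t k‖ ≤ Lg k * ‖x (t + 1) k - x t k‖) ∧
      (∑ k, ‖x (t + 1) k - x0 (t + 1)‖) ≤ ∑ k, Lg k / ρ k * ‖x (t + 1) k - x t k‖ := by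
  have hy : ∀ (s : ℕ) (k : Fin K), y (s + 1) k = -(g' k (x (s + 1) k)) := by
    intro s k
    rw [hyupd s k]
    exact foc_consensus (g k) (g' k (x (s + 1) k)) (y s k) (x0 (s + 1)) (x (s + 1) k)
      (ρ k) (hgrad k _) (hxupd s k)
  intro t ht
  obtain ⟨t', rfl⟩ : ∃ t', t = t' + 1 := ⟨t - 1, (Nat.succ_pred_eq_of_pos ht).symm⟩
  have hpart : ∀ k : Fin K,
      ρ k * ‖x (t' + 1 + 1) k - x0 (t' + 1 + 1)‖ = ‖y (t' + 1 + 1) k - y (t' + 1) k‖ ∧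
      ‖y (t' + 1 + 1) k - y (t' + 1) k‖ ≤ Lg k * ‖x (t' + 1 + 1) k - x (t' + 1) k‖ := by
    intro k
    constructor
    · rw [hyupd (t' + 1) k]
      simp [norm_smul, abs_of_pos (hρ k)]
    · rw [hy (t' + 1) k, hy t' k]
      calc ‖-g' k (x (t' + 1 + 1) k) - -g' k (x (t' + 1) k)‖
          = ‖g' k (x (t' + 1 + 1) k) - g' k (x (t' + 1) k)‖ := by
            rw [← norm_neg]; congr 1; abel
        _ ≤ Lg k * ‖x (t' + 1 + 1) k - x (t' + 1) k‖ := hLip k _ _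
  refine ⟨hpart, Finset.sum_le_sum fun k _ => ?_⟩
  obtain ⟨he, hle⟩ := hpart k
  have h1 : ρ k * ‖x (t' + 1 + 1) k - x0 (t' + 1 + 1)‖
      ≤ Lg k * ‖x (t' + 1 + 1) k - x (t' + 1) k‖ := he ▸ hle
  rw [div_mul_eq_mul_div, le_div_iff₀ (hρ k)]
  linarith [mul_comm (ρ k) ‖x (t' + 1 + 1) k - x0 (t' + 1 + 1)‖]
end

section
/- (Lemma 3.1) Let the sequences {x_k^t}, {x_0^t}, {y_k^t} be generated by the proximal ADMM (Algorithm 3) for the consensus problem with the period-T essentially cyclic rule, and suppose ∇g_k is Lipschitz continuous with constant L_k > 0 for all k. Then for every t ≥ 1 and every k = 1,…,K: (i) if k ∈ C^{t+1} then ∇g_k(x_0^{t+1}) + L_k(x_k^{t+1} − x_0^{t+1}) = −y_k^{t+1}; and (ii) 2L_k² (4‖x_0^{t+1} − x_0^{t(k)}‖² + ‖x_k^{t+1} − x_k^t‖²) ≥ ‖y_k^{t+1} − y_k^t‖², where t(k) := max{r ≤ t : k ∈ C^r}. -/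
open Filter
open scoped RealInnerProductSpace BigOperators

/-- **Lemma 3.1.**  For the proximal ADMM (Algorithm 3) on the consensus problem with the
period-`T` essentially cyclic rule, for every `t ≥ 1` and `k`:
(i) if `k ∈ C^{t+1}` then `∇g_k(x_0^{t+1}) + L_k(x_k^{t+1} − x_0^{t+1}) = −y_k^{t+1}`, and
(ii) `2L_k²(4‖x_0^{t+1} − x_0^{t(k)}‖² + ‖x_k^{t+1} − x_k^t‖²) ≥ ‖y_k^{t+1} − y_k^t‖²`,
where `t(k) = max{r ≤ t : k ∈ C^r}`. -/
theorem lemma3_1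
    {N K : ℕ} (hK : 1 ≤ K)
    (g : Fin K → EuclideanSpace ℝ (Fin N) → ℝ)
    (g' : Fin K → EuclideanSpace ℝ (Fin N) → EuclideanSpace ℝ (Fin N))
    (h : EuclideanSpace ℝ (Fin N) → ℝ)
    (X : Set (EuclideanSpace ℝ (Fin N)))
    (Lg ρ : Fin K → ℝ)
    (x : ℕ → Fin K → EuclideanSpace ℝ (Fin N))
    (x0 : ℕ → EuclideanSpace ℝ (Fin N))
    (y : ℕ → Fin K → EuclideanSpace ℝ (Fin N))
    (C : ℕ → Finset (Fin K))
    -- data assumptions (Assumption A1)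
    (hgrad : ∀ k z, HasGradientAt (g k) (g' k z) z)
    (hLpos : ∀ k, 0 < Lg k)
    (hLip : ∀ k u v, ‖g' k u - g' k v‖ ≤ Lg k * ‖u - v‖)
    (hconv : ConvexOn ℝ Set.univ h)
    (hXne : X.Nonempty) (hXcl : IsClosed X) (hXcv : Convex ℝ X)
    (hρ : ∀ k, 0 < ρ k)
    -- Algorithm 3 (proximal ADMM)
    (hx0upd : ∀ t : ℕ, x0 (t + 1) ∈ X ∧ ∀ z ∈ X,
      augL g h ρ (x t) (x0 (t + 1)) (y t) ≤ augL g h ρ (x t) z (y t))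
    (hxupd : ∀ (t : ℕ) (k : Fin K),
      (k ∈ C (t + 1) → x (t + 1) k
        = x0 (t + 1) - (ρ k + Lg k)⁻¹ • (g' k (x0 (t + 1)) + y t k)) ∧
      (k ∉ C (t + 1) → x (t + 1) k = x t k))
    (hyupd : ∀ (t : ℕ) (k : Fin K),
      (k ∈ C (t + 1) → y (t + 1) k = y t k + ρ k • (x (t + 1) k - x0 (t + 1))) ∧
      (k ∉ C (t + 1) → y (t + 1) k = y t k))
    -- period-T essentially cyclic rule
    (hC1 : C 1 = Finset.univ)
    (T : ℕ) (hT : 1 ≤ T)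
    (hcyc : ∀ (t : ℕ) (j : Fin K), ∃ i, 1 ≤ i ∧ i ≤ T ∧ j ∈ C (t + i)) :
    ∀ t : ℕ, 1 ≤ t → ∀ k : Fin K,
      (k ∈ C (t + 1) →
        g' k (x0 (t + 1)) + Lg k • (x (t + 1) k - x0 (t + 1)) = -(y (t + 1) k)) ∧
      ‖y (t + 1) k - y t k‖ ^ 2
        ≤ 2 * Lg k ^ 2 *
            (4 * ‖x0 (t + 1) - x0 (Nat.findGreatest (fun r => k ∈ C r) t)‖ ^ 2
              + ‖x (t + 1) k - x t k‖ ^ 2) := by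
  -- Key identity (part (i)): valid whenever `k ∈ C (t+1)`.
  have key : ∀ t : ℕ, ∀ k : Fin K, k ∈ C (t + 1) →
      g' k (x0 (t + 1)) + Lg k • (x (t + 1) k - x0 (t + 1)) = -(y (t + 1) k) := by
    intro t k hk
    have hx := (hxupd t k).1 hk
    have hy := (hyupd t k).1 hk
    have hc : ρ k + Lg k ≠ 0 := (add_pos (hρ k) (hLpos k)).ne'
    rw [hy, hx]
    match_scalars <;> field_simp <;> ring
  intro t ht k
  set s := Nat.findGreatest (fun r => k ∈ C r) t with hsdef
  have hk1 : k ∈ C 1 := hC1 ▸ Finset.mem_univ k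
  have hsle : s ≤ t := Nat.findGreatest_le t
  have hs1 : 1 ≤ s := Nat.le_findGreatest ht hk1
  have hks : k ∈ C s := Nat.findGreatest_spec (P := fun r => k ∈ C r) ht hk1
  -- the variables for block `k` are frozen between updates
  have frozen : ∀ r, s ≤ r → r ≤ t → x r k = x s k ∧ y r k = y s k := by
    intro r
    induction r with
    | zero => intro h1 _; exact absurd (le_trans hs1 h1) (by omega)
    | succ r ih =>
      intro h1 h2
      rcases eq_or_lt_of_le h1 with heq | hlt
      · rw [← heq]; exact ⟨rfl, rfl⟩
      · have hnot : k ∉ C (r + 1) := Nat.findGreatest_is_greatest hlt h2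
        obtain ⟨hx', hy'⟩ := ih (by omega) (by omega)
        exact ⟨((hxupd r k).2 hnot).trans hx', ((hyupd r k).2 hnot).trans hy'⟩
  obtain ⟨hxt, hyt⟩ := frozen t hsle le_rfl
  obtain ⟨s', hs'⟩ : ∃ s', s = s' + 1 := ⟨s - 1, by omega⟩
  have idS : g' k (x0 s) + Lg k • (x s k - x0 s) = -(y s k) := by
    rw [hs']; exact key s' k (hs' ▸ hks)
  refine ⟨key t k, ?_⟩
  by_cases hk : k ∈ C (t + 1)
  · have id1 := key t k hk
    have e1 : y (t + 1) k = -(g' k (x0 (t + 1)) + Lg k • (x (t + 1) k - x0 (t + 1))) :=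
      by rw [id1, neg_neg]
    have e2 : y s k = -(g' k (x0 s) + Lg k • (x s k - x0 s)) := by rw [idS, neg_neg]
    have hdiff : y (t + 1) k - y t k
        = (g' k (x0 s) - g' k (x0 (t + 1)))
          + Lg k • ((x t k - x (t + 1) k) + (x0 (t + 1) - x0 s)) := by
      rw [hyt, e1, e2, hxt]
      module
    have hL0 : (0 : ℝ) ≤ Lg k := (hLpos k).le
    have h1 : ‖y (t + 1) k - y t k‖
        ≤ Lg k * (2 * ‖x0 (t + 1) - x0 s‖ + ‖x (t + 1) k - x t k‖) := by
      rw [hdiff]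
      calc ‖(g' k (x0 s) - g' k (x0 (t + 1)))
            + Lg k • ((x t k - x (t + 1) k) + (x0 (t + 1) - x0 s))‖
          ≤ ‖g' k (x0 s) - g' k (x0 (t + 1))‖
            + ‖Lg k • ((x t k - x (t + 1) k) + (x0 (t + 1) - x0 s))‖ := norm_add_le _ _
        _ ≤ Lg k * ‖x0 s - x0 (t + 1)‖
            + Lg k * (‖x t k - x (t + 1) k‖ + ‖x0 (t + 1) - x0 s‖) := by
            gcongr
            · exact hLip k _ _
            · rw [norm_smul, Real.norm_eq_abs, abs_of_nonneg hL0]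
              gcongr
              exact norm_add_le _ _
        _ = Lg k * (2 * ‖x0 (t + 1) - x0 s‖ + ‖x (t + 1) k - x t k‖) := by
            rw [norm_sub_rev (x0 s), norm_sub_rev (x t k)]; ring
    have h2 : ‖y (t + 1) k - y t k‖ ^ 2
        ≤ (Lg k * (2 * ‖x0 (t + 1) - x0 s‖ + ‖x (t + 1) k - x t k‖)) ^ 2 :=
      pow_le_pow_left₀ (norm_nonneg _) h1 2
    nlinarith [h2, sq_nonneg (Lg k * (2 * ‖x0 (t + 1) - x0 s‖ - ‖x (t + 1) k - x t k‖))]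
  · rw [(hyupd t k).2 hk, sub_self, norm_zero, zero_pow (two_ne_zero)]
    have hL0 : (0 : ℝ) < Lg k := hLpos k
    positivity
end

section
/- (Lemma 3.2) Let the sequences {x_k^t}, {x_0^t}, {y_k^t} be generated by the proximal ADMM (Algorithm 3) for the consensus problem with the period-T essentially cyclic rule, and suppose ∇g_k is Lipschitz continuous with constant L_k > 0 for all k. Define ℓ_k(x; x_0^{t+1}, y^t) := g_k(x) + ⟨y_k^t, x − x_0^{t+1}⟩ + (ρ_k/2)‖x − x_0^{t+1}‖². Then for every t ≥ 1 and every k = 1,…,K: ℓ_k(x_k^{t+1}; x_0^{t+1}, y^t) − ℓ_k(x_k^t; x_0^{t+1}, y^t) ≤ −((ρ_k − 7L_k)/2)‖x_k^{t+1} − x_k^t‖² + (4L_k/ρ_k²)‖y_k^{t+1} − y_k^t‖². -/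
open Filter
open scoped RealInnerProductSpace BigOperators

lemma descent_lemma {E : Type*} [NormedAddCommGroup E] [InnerProductSpace ℝ E]
    [CompleteSpace E]
    (f : E → ℝ) (f' : E → E) (hf : ∀ z, HasGradientAt f (f' z) z)
    (L : ℝ) (hL : 0 ≤ L) (hLip : ∀ a b, ‖f' a - f' b‖ ≤ L * ‖a - b‖) (u v : E) :
    f u ≤ f v + ⟪f' v, u - v⟫ + L * ‖u - v‖ ^ 2 := by
  have hseg : ∀ z ∈ segment ℝ v u, ‖z - v‖ ≤ ‖u - v‖ := by
    rintro z ⟨p, q, hp, hq, hpq, rfl⟩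
    have : p • v + q • u - v = q • (u - v) := by
      have hp1 : p = 1 - q := by linarith
      rw [hp1]; module
    rw [this, norm_smul, Real.norm_eq_abs, abs_of_nonneg hq]
    nlinarith [norm_nonneg (u - v)]
  have key := Convex.norm_image_sub_le_of_norm_hasFDerivWithin_le'
    (f := f) (f' := fun z => InnerProductSpace.toDual ℝ E (f' z))
    (φ := InnerProductSpace.toDual ℝ E (f' v))
    (C := L * ‖u - v‖) (s := segment ℝ v u)
    (fun z _ => (hf z).hasFDerivAt.hasFDerivWithinAt)
    (fun z hz => by
      rw [← map_sub, (InnerProductSpace.toDual ℝ E).norm_map]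
      exact le_trans (hLip z v) (by nlinarith [hseg z hz, norm_nonneg (z - v)]))
    (convex_segment v u) (left_mem_segment ℝ v u) (right_mem_segment ℝ v u)
  have hd : (InnerProductSpace.toDual ℝ E (f' v)) (u - v) = ⟪f' v, u - v⟫ := rfl
  rw [hd] at key
  have := le_trans (le_abs_self _) (by rwa [Real.norm_eq_abs] at key :
    |f u - f v - ⟪f' v, u - v⟫| ≤ L * ‖u - v‖ * ‖u - v‖)
  nlinarith [this]

set_option maxHeartbeats 1000000 in
theorem lemma3_2'
    {N K : ℕ}
    (g : Fin K → EuclideanSpace ℝ (Fin N) → ℝ)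
    (g' : Fin K → EuclideanSpace ℝ (Fin N) → EuclideanSpace ℝ (Fin N))
    (Lg ρ : Fin K → ℝ)
    (x : ℕ → Fin K → EuclideanSpace ℝ (Fin N))
    (x0 : ℕ → EuclideanSpace ℝ (Fin N))
    (y : ℕ → Fin K → EuclideanSpace ℝ (Fin N))
    (C : ℕ → Finset (Fin K))
    (hgrad : ∀ k z, HasGradientAt (g k) (g' k z) z)
    (hLpos : ∀ k, 0 < Lg k)
    (hLip : ∀ k u v, ‖g' k u - g' k v‖ ≤ Lg k * ‖u - v‖)
    (hρ : ∀ k, 0 < ρ k)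
    (hxupd : ∀ (t : ℕ) (k : Fin K),
      (k ∈ C (t + 1) → x (t + 1) k
        = x0 (t + 1) - (ρ k + Lg k)⁻¹ • (g' k (x0 (t + 1)) + y t k)) ∧
      (k ∉ C (t + 1) → x (t + 1) k = x t k))
    (hyupd : ∀ (t : ℕ) (k : Fin K),
      (k ∈ C (t + 1) → y (t + 1) k = y t k + ρ k • (x (t + 1) k - x0 (t + 1))) ∧
      (k ∉ C (t + 1) → y (t + 1) k = y t k)) :
    ∀ t : ℕ, 1 ≤ t → ∀ k : Fin K,
      (g k (x (t + 1) k) + ⟪y t k, x (t + 1) k - x0 (t + 1)⟫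
          + ρ k / 2 * ‖x (t + 1) k - x0 (t + 1)‖ ^ 2)
        - (g k (x t k) + ⟪y t k, x t k - x0 (t + 1)⟫
            + ρ k / 2 * ‖x t k - x0 (t + 1)‖ ^ 2)
      ≤ -((ρ k - 7 * Lg k) / 2) * ‖x (t + 1) k - x t k‖ ^ 2
          + 4 * Lg k / ρ k ^ 2 * ‖y (t + 1) k - y t k‖ ^ 2 := by
  intro t _ k
  by_cases hk : k ∈ C (t + 1)
  case neg =>
    rw [(hxupd t k).2 hk, (hyupd t k).2 hk]
    simp
  case pos =>
    set u := x (t + 1) k with hu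
    set v := x t k with hv
    set z := x0 (t + 1) with hz
    set w := y t k with hwdef
    set L := Lg k with hLdef
    set r := ρ k with hrdef
    have hL : 0 < L := hLpos k
    have hr : 0 < r := hρ k
    have hrL : r + L ≠ 0 := by positivity
    -- the x-update gives w = (r+L) • (z - u) - g' k z
    have hw : w = (r + L) • (z - u) - g' k z := by
      have hx := (hxupd t k).1 hk
      rw [← hu, ← hz, ← hwdef, ← hLdef, ← hrdef] at hx
      have he : (r + L) • (z - u) = g' k z + w := by
        rw [hx, sub_sub_cancel, smul_inv_smul₀ hrL]
      rw [he]; abel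
    -- the y-update
    have hyd : y (t + 1) k - w = r • (u - z) := by
      have hy := (hyupd t k).1 hk
      rw [← hu, ← hz, ← hwdef, ← hrdef] at hy
      rw [hy]; abel
    have hydn : ‖y (t + 1) k - w‖ ^ 2 = r ^ 2 * ‖u - z‖ ^ 2 := by
      rw [hyd, norm_smul, Real.norm_eq_abs, abs_of_pos hr, mul_pow]
    set a := ‖u - v‖ with ha
    set b := ‖u - z‖ with hb
    set c := ‖v - z‖ with hc
    have ha0 : 0 ≤ a := norm_nonneg _
    have hb0 : 0 ≤ b := norm_nonneg _
    -- descent lemma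
    have h1 : g k u ≤ g k v + ⟪g' k v, u - v⟫ + L * a ^ 2 :=
      descent_lemma (g k) (g' k) (hgrad k) L hL.le (hLip k) u v
    -- triangle inequality
    have h2 : c ≤ a + b := by
      calc c = ‖(v - u) + (u - z)‖ := by rw [sub_add_sub_cancel]
      _ ≤ ‖v - u‖ + ‖u - z‖ := norm_add_le _ _
      _ = a + b := by rw [norm_sub_rev]
    -- Cauchy-Schwarz + Lipschitz
    have h3 : ⟪g' k v - g' k z, u - v⟫ ≤ L * c * a := by
      calc ⟪g' k v - g' k z, u - v⟫ ≤ ‖g' k v - g' k z‖ * ‖u - v‖ :=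
        real_inner_le_norm _ _
      _ ≤ L * c * a := by
          have := hLip k v z
          nlinarith [norm_nonneg (g' k v - g' k z)]
    have h4 : ⟪z - u, u - v⟫ ≤ b * a := by
      calc ⟪z - u, u - v⟫ ≤ ‖z - u‖ * ‖u - v‖ := real_inner_le_norm _ _
      _ = b * a := by rw [norm_sub_rev]
    -- norm expansion
    have h5 : b ^ 2 = a ^ 2 + 2 * ⟪u - v, v - z⟫ + c ^ 2 := by
      have := norm_add_sq_real (u - v) (v - z)
      rw [sub_add_sub_cancel] at this
      linarith
    -- inner product identities
    have h6 : ⟪w, u - v⟫ = (r + L) * ⟪z - u, u - v⟫ - ⟪g' k z, u - v⟫ := by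
      rw [hw, inner_sub_left, real_inner_smul_left]
    have h7 : ⟪u - v, v - z⟫ = -a ^ 2 - ⟪z - u, u - v⟫ := by
      have e1 : v - z = (v - u) + (u - z) := by abel
      rw [e1, inner_add_right]
      have e2 : ⟪u - v, v - u⟫ = -a ^ 2 := by
        rw [show v - u = -(u - v) by abel, inner_neg_right,
          real_inner_self_eq_norm_sq]
      have e3 : ⟪u - v, u - z⟫ = -⟪z - u, u - v⟫ := by
        rw [show u - z = -(z - u) by abel, inner_neg_right, real_inner_comm]
      rw [e2, e3]; ring
    have h8 : ⟪g' k v, u - v⟫ - ⟪g' k z, u - v⟫ = ⟪g' k v - g' k z, u - v⟫ := by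
      rw [inner_sub_left]
    have h9 : ⟪w, u - z⟫ - ⟪w, v - z⟫ = ⟪w, u - v⟫ := by
      rw [← inner_sub_right]
      congr 1
      abel
    have k1 : L * c * a ≤ L * a ^ 2 + L * (a * b) := by nlinarith [mul_le_mul_of_nonneg_left h2 (mul_nonneg hL.le ha0)]
    have k2 : L * ⟪z - u, u - v⟫ ≤ L * (b * a) := mul_le_mul_of_nonneg_left h4 hL.le
    have k3 : 0 ≤ L * (a - b) ^ 2 := by positivity
    have hdiv : 4 * L / r ^ 2 * (r ^ 2 * b ^ 2) = 4 * L * b ^ 2 := by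
      field_simp
    rw [hydn, hdiv]
    nlinarith [h1, h3, h5, h6, h7, h8, h9, k1, k2, k3]

/-- **Lemma 3.2.**  For the proximal ADMM (Algorithm 3) on the consensus problem with the
period-`T` essentially cyclic rule, with
`ℓ_k(x; x_0^{t+1}, y^t) = g_k(x) + ⟨y_k^t, x − x_0^{t+1}⟩ + (ρ_k/2)‖x − x_0^{t+1}‖²`,
for every `t ≥ 1` and every `k`:
`ℓ_k(x_k^{t+1}; ·) − ℓ_k(x_k^t; ·)
   ≤ −((ρ_k − 7L_k)/2)‖x_k^{t+1} − x_k^t‖² + (4L_k/ρ_k²)‖y_k^{t+1} − y_k^t‖²`. -/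
theorem lemma3_2
    {N K : ℕ} (hK : 1 ≤ K)
    (g : Fin K → EuclideanSpace ℝ (Fin N) → ℝ)
    (g' : Fin K → EuclideanSpace ℝ (Fin N) → EuclideanSpace ℝ (Fin N))
    (h : EuclideanSpace ℝ (Fin N) → ℝ)
    (X : Set (EuclideanSpace ℝ (Fin N)))
    (Lg ρ : Fin K → ℝ)
    (x : ℕ → Fin K → EuclideanSpace ℝ (Fin N))
    (x0 : ℕ → EuclideanSpace ℝ (Fin N))
    (y : ℕ → Fin K → EuclideanSpace ℝ (Fin N))
    (C : ℕ → Finset (Fin K))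
    -- data assumptions (Assumption A1)
    (hgrad : ∀ k z, HasGradientAt (g k) (g' k z) z)
    (hLpos : ∀ k, 0 < Lg k)
    (hLip : ∀ k u v, ‖g' k u - g' k v‖ ≤ Lg k * ‖u - v‖)
    (hconv : ConvexOn ℝ Set.univ h)
    (hXne : X.Nonempty) (hXcl : IsClosed X) (hXcv : Convex ℝ X)
    (hρ : ∀ k, 0 < ρ k)
    -- Algorithm 3 (proximal ADMM)
    (hx0upd : ∀ t : ℕ, x0 (t + 1) ∈ X ∧ ∀ z ∈ X,
      augL g h ρ (x t) (x0 (t + 1)) (y t) ≤ augL g h ρ (x t) z (y t))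
    (hxupd : ∀ (t : ℕ) (k : Fin K),
      (k ∈ C (t + 1) → x (t + 1) k
        = x0 (t + 1) - (ρ k + Lg k)⁻¹ • (g' k (x0 (t + 1)) + y t k)) ∧
      (k ∉ C (t + 1) → x (t + 1) k = x t k))
    (hyupd : ∀ (t : ℕ) (k : Fin K),
      (k ∈ C (t + 1) → y (t + 1) k = y t k + ρ k • (x (t + 1) k - x0 (t + 1))) ∧
      (k ∉ C (t + 1) → y (t + 1) k = y t k))
    -- period-T essentially cyclic rule
    (hC1 : C 1 = Finset.univ)
    (T : ℕ) (hT : 1 ≤ T)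
    (hcyc : ∀ (t : ℕ) (j : Fin K), ∃ i, 1 ≤ i ∧ i ≤ T ∧ j ∈ C (t + i)) :
    ∀ t : ℕ, 1 ≤ t → ∀ k : Fin K,
      (g k (x (t + 1) k) + ⟪y t k, x (t + 1) k - x0 (t + 1)⟫
          + ρ k / 2 * ‖x (t + 1) k - x0 (t + 1)‖ ^ 2)
        - (g k (x t k) + ⟪y t k, x t k - x0 (t + 1)⟫
            + ρ k / 2 * ‖x t k - x0 (t + 1)‖ ^ 2)
      ≤ -((ρ k - 7 * Lg k) / 2) * ‖x (t + 1) k - x t k‖ ^ 2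
          + 4 * Lg k / ρ k ^ 2 * ‖y (t + 1) k - y t k‖ ^ 2 := by
  exact lemma3_2' g g' Lg ρ x x0 y C hgrad hLpos hLip hρ hxupd hyupd
end

section
/- (Lemma 3.3) Let the sequences {x_k^t}, {x_0^t}, {y_k^t} be generated by the proximal ADMM (Algorithm 3) for the consensus problem with the period-T essentially cyclic rule, and suppose ∇g_k is Lipschitz continuous with constant L_k > 0 for all k. Then for every t ≥ 1: L({x_k^{t+1}}, x_0^{t+1}; y^{t+1}) − L({x_k^1}, x_0^1; y^1) ≤ −Σ_{i=1}^t Σ_{k=1}^K α_k ‖x_k^{i+1} − x_k^i‖² − Σ_{i=1}^t Σ_{k=1}^K β_k ‖x_0^{i+1} − x_0^i‖², where α_k := (ρ_k − 7L_k)/2 − (4L_k/ρ_k² + 1/ρ_k)·2L_k² and β_k := ρ_k/2 − T²·(4L_k/ρ_k² + 1/ρ_k)·8L_k². -/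
open Filter
open scoped RealInnerProductSpace BigOperators

set_option maxHeartbeats 1000000

section aux
variable {F : Type*} [NormedAddCommGroup F] [InnerProductSpace ℝ F] [CompleteSpace F]

lemma descent_bound (g : F → ℝ) (g' : F → F) (L : ℝ) (hL : 0 ≤ L)
    (hgrad : ∀ z, HasGradientAt g (g' z) z)
    (hLip : ∀ u v, ‖g' u - g' v‖ ≤ L * ‖u - v‖) (u v : F) :
    |g v - g u - ⟪g' u, v - u⟫| ≤ L * ‖v - u‖ ^ 2 := by
  have hseg : Convex ℝ (segment ℝ u v) := convex_segment u v
  have hbd : ∀ z ∈ segment ℝ u v,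
      ‖(InnerProductSpace.toDual ℝ F (g' z)) - (InnerProductSpace.toDual ℝ F (g' u))‖
        ≤ L * ‖v - u‖ := by
    intro z hz
    rw [← map_sub, (InnerProductSpace.toDual ℝ F).norm_map]
    refine (hLip z u).trans ?_
    gcongr
    obtain ⟨a, b, ha, hb, hab, rfl⟩ := hz
    have : a • u + b • v - u = b • (v - u) := by
      rw [smul_sub]
      have ha1 : a = 1 - b := by linarith
      rw [ha1, sub_smul, one_smul]; abel
    rw [this, norm_smul, Real.norm_eq_abs, abs_of_nonneg hb]
    nlinarith [norm_nonneg (v - u)]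
  have key := hseg.norm_image_sub_le_of_norm_hasFDerivWithin_le'
    (f := g) (f' := fun z => InnerProductSpace.toDual ℝ F (g' z))
    (φ := InnerProductSpace.toDual ℝ F (g' u)) (C := L * ‖v - u‖)
    (fun z _ => (hgrad z).hasFDerivAt.hasFDerivWithinAt) hbd
    (left_mem_segment ℝ u v) (right_mem_segment ℝ u v)
  rw [InnerProductSpace.toDual_apply_apply, Real.norm_eq_abs] at key
  calc |g v - g u - ⟪g' u, v - u⟫| ≤ L * ‖v - u‖ * ‖v - u‖ := key
    _ = L * ‖v - u‖ ^ 2 := by ring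

lemma quad_id (a w : F) (c : ℝ) (hc : c ≠ 0) (v : F) :
    ⟪a, v - w⟫ + c/2 * ‖v - w‖^2
      = ⟪a, (w - c⁻¹ • a) - w⟫ + c/2 * ‖(w - c⁻¹ • a) - w‖^2
        + c/2 * ‖v - (w - c⁻¹ • a)‖^2 := by
  have h1 : (w - c⁻¹ • a) - w = -(c⁻¹ • a) := by abel
  have h2 : v - (w - c⁻¹ • a) = (v - w) + c⁻¹ • a := by abel
  rw [h1, h2, norm_add_sq_real, inner_neg_right, norm_neg, real_inner_smul_right,
    real_inner_smul_right, norm_smul, Real.norm_eq_abs, real_inner_self_eq_norm_sq,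
    real_inner_comm (v - w) a]
  rw [mul_pow, sq_abs]
  field_simp
  ring

lemma combo_norm_sq (a b : F) (l : ℝ) :
    ‖(1 - l) • a + l • b‖^2
      = (1 - l) * ‖a‖^2 + l * ‖b‖^2 - l * (1 - l) * ‖a - b‖^2 := by
  have h : (1 - l) • a + l • b = a + l • (b - a) := by
    rw [smul_sub, sub_smul, one_smul]; abel
  rw [h, norm_add_sq_real, real_inner_smul_right, norm_smul, Real.norm_eq_abs,
    mul_pow, sq_abs, ← norm_sub_rev a b, norm_sub_sq_real,
    inner_sub_right, real_inner_self_eq_norm_sq]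
  ring

end aux


section aux2
variable {F : Type*} [NormedAddCommGroup F] [InnerProductSpace ℝ F] [CompleteSpace F]

lemma core_est (gk : F → ℝ) (gk' : F → F) (L ρk : ℝ) (hL : 0 < L) (hρ : 0 < ρk)
    (hgrad : ∀ z, HasGradientAt gk (gk' z) z)
    (hLip : ∀ u v, ‖gk' u - gk' v‖ ≤ L * ‖u - v‖)
    (w ws v yk v' : F) (Q2 : ℝ)
    (hyk : yk = -gk' ws - L • (v - ws))
    (hv' : v' = w - (ρk + L)⁻¹ • (gk' w + yk))
    (hQ : ‖w - ws‖^2 ≤ Q2) :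
    (gk v' + ⟪yk + ρk • (v' - w), v' - w⟫ + ρk/2 * ‖v' - w‖^2)
      - (gk v + ⟪yk, v - w⟫ + ρk/2 * ‖v - w‖^2)
    ≤ -((ρk - 7*L)/2 - (4*L/ρk^2 + 1/ρk)*(2*L^2)) * ‖v' - v‖^2
      + (4*L/ρk^2 + 1/ρk)*(8*L^2) * Q2 := by
  have hc : ρk + L ≠ 0 := by positivity
  have hQ0 : (0:ℝ) ≤ Q2 := le_trans (by positivity) hQ
  -- closed form relations
  have hinv : (ρk + L) • (v' - w) = -(gk' w + yk) := by
    have hd : v' - w = -((ρk + L)⁻¹ • (gk' w + yk)) := by rw [hv']; abel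
    rw [hd, smul_neg, smul_smul, mul_inv_cancel₀ hc, one_smul]
  have hy' : yk + ρk • (v' - w) = -gk' w - L • (v' - w) := by
    have : yk = -(ρk + L) • (v' - w) - gk' w := by
      rw [neg_smul, hinv]; abel
    rw [this]; module
  -- descent bounds
  have h1 : gk v' ≤ gk w + ⟪gk' w, v' - w⟫ + L * ‖v' - w‖^2 := by
    have := abs_le.1 (descent_bound gk gk' L hL.le hgrad hLip w v')
    linarith [this.2]
  have h3 : gk w + ⟪gk' w, v - w⟫ ≤ gk v + L * ‖v - w‖^2 := by
    have := abs_le.1 (descent_bound gk gk' L hL.le hgrad hLip w v)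
    linarith [this.1]
  -- quadratic identity
  have h2 := quad_id (gk' w + yk) w (ρk + L) hc v
  rw [← hv'] at h2
  rw [inner_add_left, inner_add_left, norm_sub_rev v v'] at h2
  -- abbreviations
  set A := ‖v' - w‖^2 with hA
  set B := ‖v' - v‖^2 with hB
  set E := ‖v - w‖^2 with hE
  set R2 := ‖w - ws‖^2 with hR2
  -- dual variable difference bound
  have hdy : ρk • (v' - w) = -(gk' w - gk' ws) - L • ((v' - v) - (w - ws)) := by
    have : ρk • (v' - w) = (yk + ρk • (v' - w)) - yk := by abel
    rw [this, hy', hyk]; module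
  have hnorm : ρk * ‖v' - w‖ ≤ L * ‖v' - v‖ + 2 * L * ‖w - ws‖ := by
    have e1 : ρk * ‖v' - w‖ = ‖ρk • (v' - w)‖ := by
      rw [norm_smul, Real.norm_eq_abs, abs_of_pos hρ]
    rw [e1, hdy]
    calc ‖-(gk' w - gk' ws) - L • ((v' - v) - (w - ws))‖
        ≤ ‖-(gk' w - gk' ws)‖ + ‖L • ((v' - v) - (w - ws))‖ := norm_sub_le _ _
      _ = ‖gk' w - gk' ws‖ + L * ‖(v' - v) - (w - ws)‖ := by
          rw [norm_neg, norm_smul, Real.norm_eq_abs, abs_of_pos hL]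
      _ ≤ L * ‖w - ws‖ + L * (‖v' - v‖ + ‖w - ws‖) := by
          gcongr
          · exact hLip w ws
          · exact norm_sub_le _ _
      _ = L * ‖v' - v‖ + 2 * L * ‖w - ws‖ := by ring
  have F3 : ρk^2 * A ≤ 2*L^2*B + 8*L^2*R2 := by
    rw [hA, hB, hR2]
    have hsq : (ρk * ‖v' - w‖)^2 ≤ (L * ‖v' - v‖ + 2 * L * ‖w - ws‖)^2 :=
      pow_le_pow_left₀ (by positivity) hnorm 2
    nlinarith [hsq, sq_nonneg (L * ‖v' - v‖ - 2 * L * ‖w - ws‖)]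
  have F2 : E ≤ 2*B + 2*A := by
    have tri : ‖v - w‖ ≤ ‖v' - v‖ + ‖v' - w‖ := by
      calc ‖v - w‖ = ‖(v - v') + (v' - w)‖ := by rw [sub_add_sub_cancel]
        _ ≤ ‖v - v'‖ + ‖v' - w‖ := norm_add_le _ _
        _ = ‖v' - v‖ + ‖v' - w‖ := by rw [norm_sub_rev]
    rw [hE, hB, hA]
    nlinarith [tri, norm_nonneg (v - w), norm_nonneg (v' - v), norm_nonneg (v' - w),
      sq_nonneg (‖v' - v‖ - ‖v' - w‖)]
  -- first combination
  have e1 : ⟪yk + ρk • (v' - w), v' - w⟫ = ⟪yk, v' - w⟫ + ρk * A := by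
    rw [inner_add_left, real_inner_smul_left, real_inner_self_eq_norm_sq, hA]
  have F1 : (gk v' + ⟪yk + ρk • (v' - w), v' - w⟫ + ρk/2 * A)
      - (gk v + ⟪yk, v - w⟫ + ρk/2 * E)
      ≤ (3*L/2)*E - ((ρk+L)/2)*B + (L/2 + ρk)*A := by
    rw [e1]
    linarith [h1, h3, h2]
  -- scaled versions for the final linear combination
  have hc2 : (0:ℝ) < 4*L/ρk^2 + 1/ρk := by positivity
  have F2' : (3*L/2)*E ≤ (3*L/2)*(2*B + 2*A) :=
    mul_le_mul_of_nonneg_left F2 (by positivity)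
  have FA : (7*L/2 + ρk)*A ≤ (4*L/ρk^2 + 1/ρk)*(2*L^2*B) + (4*L/ρk^2 + 1/ρk)*(8*L^2*R2) := by
    have e : (4*L/ρk^2 + 1/ρk)*(2*L^2*B) + (4*L/ρk^2 + 1/ρk)*(8*L^2*R2)
        = ((4*L + ρk)*(2*L^2*B + 8*L^2*R2))/ρk^2 := by
      field_simp
    rw [e, le_div_iff₀ (by positivity)]
    have hM0 : (0:ℝ) ≤ 2*L^2*B + 8*L^2*R2 := by positivity
    calc (7*L/2 + ρk)*A*ρk^2 = (7*L/2 + ρk)*(ρk^2*A) := by ring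
      _ ≤ (4*L + ρk)*(2*L^2*B + 8*L^2*R2) :=
          mul_le_mul (by linarith) F3 (by positivity) (by linarith)
  have hQ' : (4*L/ρk^2 + 1/ρk)*(8*L^2)*R2 ≤ (4*L/ρk^2 + 1/ρk)*(8*L^2)*Q2 := by
    have : (0:ℝ) ≤ (4*L/ρk^2 + 1/ρk)*(8*L^2) := by positivity
    exact mul_le_mul_of_nonneg_left hQ this
  have hLB : (0:ℝ) ≤ L*B := by positivity
  have hexp : (4*L/ρk^2 + 1/ρk)*(8*L^2)*R2 = (4*L/ρk^2 + 1/ρk)*(8*L^2*R2) := by ring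
  have hexp2 : (4*L/ρk^2 + 1/ρk)*(8*L^2)*Q2 = (4*L/ρk^2 + 1/ρk)*(8*L^2*Q2) := by ring
  -- assemble
  have goalineq : (3*L/2)*E - ((ρk+L)/2)*B + (L/2 + ρk)*A
      ≤ -((ρk - 7*L)/2 - (4*L/ρk^2 + 1/ρk)*(2*L^2)) * B
        + (4*L/ρk^2 + 1/ρk)*(8*L^2) * Q2 := by
    have ha1 : -((ρk - 7*L)/2 - (4*L/ρk^2 + 1/ρk)*(2*L^2)) * B
        = (7*L - ρk)/2 * B + (4*L/ρk^2 + 1/ρk)*(2*L^2*B) := by ring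
    rw [ha1]
    rw [hexp] at hQ'
    rw [hexp2] at hQ'
    linarith [F2', FA, hQ', hLB]
  calc (gk v' + ⟪yk + ρk • (v' - w), v' - w⟫ + ρk/2 * A)
      - (gk v + ⟪yk, v - w⟫ + ρk/2 * E)
      ≤ (3*L/2)*E - ((ρk+L)/2)*B + (L/2 + ρk)*A := F1
    _ ≤ _ := goalineq

end aux2

section aux3
variable {N K : ℕ}
local notation "E" => EuclideanSpace ℝ (Fin N)

lemma x0_strong_min (g : Fin K → E → ℝ) (h : E → ℝ) (ρ : Fin K → ℝ)
    (xk : Fin K → E) (y : Fin K → E) (X : Set E)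
    (hconv : ConvexOn ℝ Set.univ h) (hXcv : Convex ℝ X) (hρ : ∀ k, 0 < ρ k)
    (zs z : E) (hzs : zs ∈ X) (hz : z ∈ X)
    (hmin : ∀ w ∈ X, augL g h ρ xk zs y ≤ augL g h ρ xk w y) :
    augL g h ρ xk zs y + ∑ k, ρ k / 2 * ‖z - zs‖^2 ≤ augL g h ρ xk z y := by
  set S := ∑ k, ρ k / 2 * ‖z - zs‖^2 with hSdef
  have hS0 : 0 ≤ S := Finset.sum_nonneg fun k _ => mul_nonneg (by linarith [hρ k]) (sq_nonneg _)
  have key : ∀ l : ℝ, 0 < l → l < 1 →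
      augL g h ρ xk zs y + (1 - l) * S ≤ augL g h ρ xk z y := by
    intro l hl0 hl1
    set zl := (1 - l) • zs + l • z with hzldef
    have hzl : zl ∈ X := hXcv hzs hz (by linarith) (by linarith) (by ring)
    have hz1 : ∀ u : E, u - zl = (1 - l) • (u - zs) + l • (u - z) := by
      intro u
      rw [hzldef]
      module
    have hsum1 : (∑ k, ⟪y k, xk k - zl⟫)
        = (1 - l) * (∑ k, ⟪y k, xk k - zs⟫) + l * (∑ k, ⟪y k, xk k - z⟫) := by
      rw [Finset.mul_sum, Finset.mul_sum, ← Finset.sum_add_distrib]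
      refine Finset.sum_congr rfl fun k _ => ?_
      rw [hz1 (xk k), inner_add_right, real_inner_smul_right, real_inner_smul_right]
    have hsum2 : (∑ k, ρ k / 2 * ‖xk k - zl‖^2)
        = (1 - l) * (∑ k, ρ k / 2 * ‖xk k - zs‖^2)
          + l * (∑ k, ρ k / 2 * ‖xk k - z‖^2) - l * (1 - l) * S := by
      rw [hSdef, Finset.mul_sum, Finset.mul_sum, Finset.mul_sum, ← Finset.sum_add_distrib,
        ← Finset.sum_sub_distrib]
      refine Finset.sum_congr rfl fun k _ => ?_
      rw [hz1 (xk k), combo_norm_sq]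
      have : xk k - zs - (xk k - z) = z - zs := by abel
      rw [this]
      ring
    have hh : h zl ≤ (1 - l) * h zs + l * h z := by
      have := hconv.2 (Set.mem_univ zs) (Set.mem_univ z)
        (by linarith : (0:ℝ) ≤ 1 - l) (le_of_lt hl0) (by ring)
      exact this
    have hmem := hmin zl hzl
    have hcomb : augL g h ρ xk zl y
        ≤ (1 - l) * augL g h ρ xk zs y + l * augL g h ρ xk z y - l * (1 - l) * S := by
      simp only [augL]
      rw [hsum1, hsum2]
      linarith [hh]
    have hfin := hmem.trans hcomb
    have h4 : l * (augL g h ρ xk zs y + (1 - l) * S) ≤ l * augL g h ρ xk z y := by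
      nlinarith [hfin]
    exact le_of_mul_le_mul_left h4 hl0
  -- limit l → 0
  refine le_of_forall_pos_le_add fun ε hε => ?_
  set l := min (1/2) (ε / (S + 1)) with hldef
  have hl0 : 0 < l := lt_min (by norm_num) (div_pos hε (by linarith))
  have hl1 : l < 1 := lt_of_le_of_lt (min_le_left _ _) (by norm_num)
  have hlS : l * S ≤ ε := by
    have h1 : l ≤ ε / (S + 1) := min_le_right _ _
    have : l * S ≤ (ε / (S + 1)) * S := mul_le_mul_of_nonneg_right h1 hS0
    calc l * S ≤ (ε / (S + 1)) * S := this
      _ ≤ ε := by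
        rw [div_mul_eq_mul_div, div_le_iff₀ (by positivity)]
        nlinarith [hε.le, hS0]
  have := key l hl0 hl1
  linarith
end aux3

lemma sum_Icc_tele {M : Type*} [AddCommGroup M] (f : ℕ → M) (a b : ℕ) (hab : a ≤ b) :
    ∑ j ∈ Finset.Icc a b, (f (j + 1) - f j) = f (b + 1) - f a := by
  induction b, hab using Nat.le_induction with
  | base => simp
  | succ n hn ih => rw [Finset.sum_Icc_succ_top (by omega), ih]; abel


/-- **Lemma 3.3.**  For the proximal ADMM (Algorithm 3) on the consensus problem with the
period-`T` essentially cyclic rule, for every `t ≥ 1`: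
`L^{t+1} − L^1 ≤ −Σ_{i=1}^t Σ_k α_k‖x_k^{i+1} − x_k^i‖² − Σ_{i=1}^t Σ_k β_k‖x_0^{i+1} − x_0^i‖²`
with `α_k = (ρ_k − 7L_k)/2 − (4L_k/ρ_k² + 1/ρ_k)·2L_k²` and
`β_k = ρ_k/2 − T²(4L_k/ρ_k² + 1/ρ_k)·8L_k²`. -/
theorem lemma3_3
    {N K : ℕ} (hK : 1 ≤ K)
    (g : Fin K → EuclideanSpace ℝ (Fin N) → ℝ)
    (g' : Fin K → EuclideanSpace ℝ (Fin N) → EuclideanSpace ℝ (Fin N))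
    (h : EuclideanSpace ℝ (Fin N) → ℝ)
    (X : Set (EuclideanSpace ℝ (Fin N)))
    (Lg ρ : Fin K → ℝ)
    (x : ℕ → Fin K → EuclideanSpace ℝ (Fin N))
    (x0 : ℕ → EuclideanSpace ℝ (Fin N))
    (y : ℕ → Fin K → EuclideanSpace ℝ (Fin N))
    (C : ℕ → Finset (Fin K))
    -- data assumptions (Assumption A1)
    (hgrad : ∀ k z, HasGradientAt (g k) (g' k z) z)
    (hLpos : ∀ k, 0 < Lg k)
    (hLip : ∀ k u v, ‖g' k u - g' k v‖ ≤ Lg k * ‖u - v‖)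
    (hconv : ConvexOn ℝ Set.univ h)
    (hXne : X.Nonempty) (hXcl : IsClosed X) (hXcv : Convex ℝ X)
    (hρ : ∀ k, 0 < ρ k)
    -- Algorithm 3 (proximal ADMM)
    (hx0upd : ∀ t : ℕ, x0 (t + 1) ∈ X ∧ ∀ z ∈ X,
      augL g h ρ (x t) (x0 (t + 1)) (y t) ≤ augL g h ρ (x t) z (y t))
    (hxupd : ∀ (t : ℕ) (k : Fin K),
      (k ∈ C (t + 1) → x (t + 1) k
        = x0 (t + 1) - (ρ k + Lg k)⁻¹ • (g' k (x0 (t + 1)) + y t k)) ∧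
      (k ∉ C (t + 1) → x (t + 1) k = x t k))
    (hyupd : ∀ (t : ℕ) (k : Fin K),
      (k ∈ C (t + 1) → y (t + 1) k = y t k + ρ k • (x (t + 1) k - x0 (t + 1))) ∧
      (k ∉ C (t + 1) → y (t + 1) k = y t k))
    -- period-T essentially cyclic rule
    (hC1 : C 1 = Finset.univ)
    (T : ℕ) (hT : 1 ≤ T)
    (hcyc : ∀ (t : ℕ) (j : Fin K), ∃ i, 1 ≤ i ∧ i ≤ T ∧ j ∈ C (t + i)) :
    ∀ t : ℕ, 1 ≤ t →
      augL g h ρ (x (t + 1)) (x0 (t + 1)) (y (t + 1))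
          - augL g h ρ (x 1) (x0 1) (y 1)
        ≤ -(∑ i ∈ Finset.Icc 1 t, ∑ k,
              ((ρ k - 7 * Lg k) / 2 - (4 * Lg k / ρ k ^ 2 + 1 / ρ k) * (2 * Lg k ^ 2))
                * ‖x (i + 1) k - x i k‖ ^ 2)
          - ∑ i ∈ Finset.Icc 1 t, ∑ k,
              (ρ k / 2 - (T : ℝ) ^ 2 * ((4 * Lg k / ρ k ^ 2 + 1 / ρ k) * (8 * Lg k ^ 2)))
                * ‖x0 (i + 1) - x0 i‖ ^ 2 := by
  intro t ht
  -- abbreviations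
  set α : Fin K → ℝ :=
    fun k => (ρ k - 7 * Lg k) / 2 - (4 * Lg k / ρ k ^ 2 + 1 / ρ k) * (2 * Lg k ^ 2) with hαdef
  set c : Fin K → ℝ := fun k => 4 * Lg k / ρ k ^ 2 + 1 / ρ k with hcdef
  have hρL : ∀ k, ρ k + Lg k ≠ 0 := fun k => by
    have := hρ k; have := hLpos k; positivity
  -- the time of the last update of block k at or before time i
  set s : Fin K → ℕ → ℕ := fun k i => Nat.findGreatest (fun j => k ∈ C j) i with hsdef
  have hs1 : ∀ k i, 1 ≤ i → 1 ≤ s k i := by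
    intro k i hi
    exact Nat.le_findGreatest (P := fun j => k ∈ C j) hi (by show k ∈ C 1; rw [hC1]; exact Finset.mem_univ k)
  have hs2 : ∀ k i, s k i ≤ i := fun k i => Nat.findGreatest_le i
  have hs3 : ∀ k i, 1 ≤ i → k ∈ C (s k i) := by
    intro k i hi
    exact Nat.findGreatest_spec (P := fun j => k ∈ C j) hi (by show k ∈ C 1; rw [hC1]; exact Finset.mem_univ k)
  -- frozen blocks between updates
  have hs4 : ∀ k i, 1 ≤ i → x i k = x (s k i) k ∧ y i k = y (s k i) k := by
    intro k i hi
    have key : ∀ m, s k i ≤ m → m ≤ i → x m k = x (s k i) k ∧ y m k = y (s k i) k := by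
      intro m hm
      induction m, hm using Nat.le_induction with
      | base => exact fun _ => ⟨rfl, rfl⟩
      | succ n hn ih =>
        intro hni
        have hnotin : k ∉ C (n + 1) := by
          have hgt : s k i < n + 1 := by omega
          exact Nat.findGreatest_is_greatest (P := fun j => k ∈ C j) hgt hni
        have hx := (hxupd n k).2 hnotin
        have hy := (hyupd n k).2 hnotin
        have := ih (by omega)
        exact ⟨hx.trans this.1, hy.trans this.2⟩
    exact key i (hs2 k i) le_rfl
  -- window length bound
  have hs5 : ∀ k i, 1 ≤ i → i + 1 ≤ s k i + T := by
    intro k i hi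
    by_cases hiT : i < T
    · have := hs1 k i hi; omega
    · obtain ⟨m, hm1, hmT, hmC⟩ := hcyc (i - T) k
      have hji : i - T + m ≤ i := by omega
      have hle : i - T + m ≤ s k i := Nat.le_findGreatest (P := fun j => k ∈ C j) hji hmC
      omega
  -- closed form of the dual variable at update times
  have hyform : ∀ σ k, 1 ≤ σ → k ∈ C σ →
      y σ k = -g' k (x0 σ) - Lg k • (x σ k - x0 σ) := by
    intro σ k hσ hk
    obtain ⟨τ, rfl⟩ : ∃ τ, σ = τ + 1 := ⟨σ - 1, by omega⟩
    have hx := (hxupd τ k).1 hk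
    have hy := (hyupd τ k).1 hk
    have hd : x (τ + 1) k - x0 (τ + 1)
        = -((ρ k + Lg k)⁻¹ • (g' k (x0 (τ + 1)) + y τ k)) := by rw [hx]; abel
    have hgy : g' k (x0 (τ + 1)) + y τ k
        = -((ρ k + Lg k) • (x (τ + 1) k - x0 (τ + 1))) := by
      rw [hd, smul_neg, smul_smul, mul_inv_cancel₀ (hρL k), one_smul, neg_neg]
    have hyτ : y τ k = -((ρ k + Lg k) • (x (τ + 1) k - x0 (τ + 1))) - g' k (x0 (τ + 1)) := by
      rw [← hgy]; abel
    rw [hy, hyτ]; module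
  -- per-window bound on movement of x0
  have hQ : ∀ k i, 1 ≤ i → ‖x0 (i + 1) - x0 (s k i)‖ ^ 2
      ≤ (T : ℝ) * ∑ j ∈ Finset.Icc (s k i) i, ‖x0 (j + 1) - x0 j‖ ^ 2 := by
    intro k i hi
    have htel := sum_Icc_tele x0 (s k i) i (hs2 k i)
    have h1 : ‖x0 (i + 1) - x0 (s k i)‖ ≤ ∑ j ∈ Finset.Icc (s k i) i, ‖x0 (j + 1) - x0 j‖ := by
      rw [← htel]; exact norm_sum_le _ _
    have h2 : ‖x0 (i + 1) - x0 (s k i)‖ ^ 2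
        ≤ (∑ j ∈ Finset.Icc (s k i) i, ‖x0 (j + 1) - x0 j‖) ^ 2 :=
      pow_le_pow_left₀ (norm_nonneg _) h1 2
    have h3 := sq_sum_le_card_mul_sum_sq (s := Finset.Icc (s k i) i)
      (f := fun j => ‖x0 (j + 1) - x0 j‖)
    have hcard : ((Finset.Icc (s k i) i).card : ℝ) ≤ (T : ℝ) := by
      have := hs5 k i hi
      rw [Nat.card_Icc]
      exact_mod_cast Nat.cast_le.2 (by omega : i + 1 - s k i ≤ T)
    have h4 : ((Finset.Icc (s k i) i).card : ℝ)
          * ∑ j ∈ Finset.Icc (s k i) i, ‖x0 (j + 1) - x0 j‖ ^ 2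
        ≤ (T : ℝ) * ∑ j ∈ Finset.Icc (s k i) i, ‖x0 (j + 1) - x0 j‖ ^ 2 := by
      apply mul_le_mul_of_nonneg_right hcard
      exact Finset.sum_nonneg fun j _ => sq_nonneg _
    calc ‖x0 (i + 1) - x0 (s k i)‖ ^ 2
        ≤ (∑ j ∈ Finset.Icc (s k i) i, ‖x0 (j + 1) - x0 j‖) ^ 2 := h2
      _ ≤ ((Finset.Icc (s k i) i).card : ℝ)
            * ∑ j ∈ Finset.Icc (s k i) i, ‖x0 (j + 1) - x0 j‖ ^ 2 := h3
      _ ≤ _ := h4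
  -- restructured augmented Lagrangian
  have hre : ∀ (xx yy : Fin K → EuclideanSpace ℝ (Fin N)) (w : EuclideanSpace ℝ (Fin N)),
      augL g h ρ xx w yy
        = h w + ∑ k, (g k (xx k) + ⟪yy k, xx k - w⟫ + ρ k / 2 * ‖xx k - w‖ ^ 2) := by
    intro xx yy w
    simp only [augL, Finset.sum_add_distrib]
    ring
  -- per-step master inequality
  have hstep : ∀ i, 1 ≤ i →
      augL g h ρ (x (i + 1)) (x0 (i + 1)) (y (i + 1))
        ≤ augL g h ρ (x i) (x0 i) (y i)
          - (∑ k, α k * ‖x (i + 1) k - x i k‖ ^ 2)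
          - (∑ k, ρ k / 2 * ‖x0 (i + 1) - x0 i‖ ^ 2)
          + ∑ k ∈ C (i + 1), c k * (8 * Lg k ^ 2)
              * ((T : ℝ) * ∑ j ∈ Finset.Icc (s k i) i, ‖x0 (j + 1) - x0 j‖ ^ 2) := by
    intro i hi
    -- step 1 : x0 update decreases L strongly
    have hx0i : x0 i ∈ X := by
      obtain ⟨τ, rfl⟩ : ∃ τ, i = τ + 1 := ⟨i - 1, by omega⟩
      exact (hx0upd τ).1
    have step1 : augL g h ρ (x i) (x0 (i + 1)) (y i)
          + ∑ k, ρ k / 2 * ‖x0 i - x0 (i + 1)‖ ^ 2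
        ≤ augL g h ρ (x i) (x0 i) (y i) :=
      x0_strong_min g h ρ (x i) (y i) X hconv hXcv hρ (x0 (i + 1)) (x0 i)
        (hx0upd i).1 hx0i (hx0upd i).2
    have hnrev : ‖x0 i - x0 (i + 1)‖ = ‖x0 (i + 1) - x0 i‖ := norm_sub_rev _ _
    -- step 2 : block updates
    have step2 : augL g h ρ (x (i + 1)) (x0 (i + 1)) (y (i + 1))
        ≤ augL g h ρ (x i) (x0 (i + 1)) (y i)
          - (∑ k, α k * ‖x (i + 1) k - x i k‖ ^ 2)
          + ∑ k ∈ C (i + 1), c k * (8 * Lg k ^ 2)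
              * ((T : ℝ) * ∑ j ∈ Finset.Icc (s k i) i, ‖x0 (j + 1) - x0 j‖ ^ 2) := by
      rw [hre, hre]
      have hCrw : (∑ k ∈ C (i + 1), c k * (8 * Lg k ^ 2)
            * ((T : ℝ) * ∑ j ∈ Finset.Icc (s k i) i, ‖x0 (j + 1) - x0 j‖ ^ 2))
          = ∑ k, (if k ∈ C (i + 1) then c k * (8 * Lg k ^ 2)
            * ((T : ℝ) * ∑ j ∈ Finset.Icc (s k i) i, ‖x0 (j + 1) - x0 j‖ ^ 2) else 0) := by
        rw [Finset.sum_ite_mem, Finset.univ_inter]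
      rw [hCrw]
      rw [sub_eq_add_neg, ← Finset.sum_neg_distrib, add_assoc, ← Finset.sum_add_distrib,
        add_assoc, ← Finset.sum_add_distrib, add_le_add_iff_left]
      apply Finset.sum_le_sum
      intro k _
      by_cases hk : k ∈ C (i + 1)
      · -- updated block : core estimate
        have hsk1 := hs1 k i hi
        have hsk3 := hs3 k i hi
        have hfroz := hs4 k i hi
        have hykform : y i k = -g' k (x0 (s k i)) - Lg k • (x i k - x0 (s k i)) := by
          rw [hfroz.2, hfroz.1]
          exact hyform (s k i) k hsk1 hsk3
        have hv' := (hxupd i k).1 hk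
        have hyupd' := (hyupd i k).1 hk
        have hce := core_est (g k) (g' k) (Lg k) (ρ k) (hLpos k) (hρ k)
          (hgrad k) (hLip k) (x0 (i + 1)) (x0 (s k i)) (x i k) (y i k) (x (i + 1) k)
          ((T : ℝ) * ∑ j ∈ Finset.Icc (s k i) i, ‖x0 (j + 1) - x0 j‖ ^ 2)
          hykform hv' (hQ k i hi)
        rw [← hyupd'] at hce
        rw [if_pos hk]
        simp only [hαdef, hcdef]
        linarith [hce]
      · -- frozen block
        have hxk := (hxupd i k).2 hk
        have hyk := (hyupd i k).2 hk
        rw [if_neg hk, hxk, hyk]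
        have : x i k - x i k = 0 := sub_self _
        rw [this, norm_zero]
        norm_num
    calc augL g h ρ (x (i + 1)) (x0 (i + 1)) (y (i + 1))
        ≤ augL g h ρ (x i) (x0 (i + 1)) (y i)
          - (∑ k, α k * ‖x (i + 1) k - x i k‖ ^ 2)
          + ∑ k ∈ C (i + 1), c k * (8 * Lg k ^ 2)
              * ((T : ℝ) * ∑ j ∈ Finset.Icc (s k i) i, ‖x0 (j + 1) - x0 j‖ ^ 2) := step2
      _ ≤ _ := by
          have : ∑ k, ρ k / 2 * ‖x0 i - x0 (i + 1)‖ ^ 2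
              = ∑ k, ρ k / 2 * ‖x0 (i + 1) - x0 i‖ ^ 2 := by
            refine Finset.sum_congr rfl fun k _ => ?_; rw [hnrev]
          rw [this] at step1
          linarith [step1]
  -- telescoping
  have tele := sum_Icc_tele (fun i => augL g h ρ (x i) (x0 i) (y i)) 1 t ht
  -- sum the per-step inequalities
  have hsumstep : augL g h ρ (x (t + 1)) (x0 (t + 1)) (y (t + 1))
        - augL g h ρ (x 1) (x0 1) (y 1)
      ≤ ∑ i ∈ Finset.Icc 1 t,
          (- (∑ k, α k * ‖x (i + 1) k - x i k‖ ^ 2)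
           - (∑ k, ρ k / 2 * ‖x0 (i + 1) - x0 i‖ ^ 2)
           + ∑ k ∈ C (i + 1), c k * (8 * Lg k ^ 2)
              * ((T : ℝ) * ∑ j ∈ Finset.Icc (s k i) i, ‖x0 (j + 1) - x0 j‖ ^ 2)) := by
    rw [← tele]
    apply Finset.sum_le_sum
    intro i hii
    have hi1 : 1 ≤ i := (Finset.mem_Icc.1 hii).1
    have := hstep i hi1
    linarith [this]
  -- counting bound for the coupling term
  have hcount : ∑ i ∈ Finset.Icc 1 t, (∑ k ∈ C (i + 1), c k * (8 * Lg k ^ 2)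
        * ((T : ℝ) * ∑ j ∈ Finset.Icc (s k i) i, ‖x0 (j + 1) - x0 j‖ ^ 2))
      ≤ ∑ i ∈ Finset.Icc 1 t, ∑ k,
          (T : ℝ) ^ 2 * (c k * (8 * Lg k ^ 2)) * ‖x0 (i + 1) - x0 i‖ ^ 2 := by
    have hW0 : ∀ k, 0 ≤ c k * (8 * Lg k ^ 2) := by
      intro k; have := hρ k; have := hLpos k; simp only [hcdef]; positivity
    have ha0 : ∀ j : ℕ, (0:ℝ) ≤ ‖x0 (j + 1) - x0 j‖ ^ 2 := fun j => sq_nonneg _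
    -- first extend the inner sum to all blocks
    have hext : ∀ i ∈ Finset.Icc 1 t, (∑ k ∈ C (i + 1), c k * (8 * Lg k ^ 2)
          * ((T : ℝ) * ∑ j ∈ Finset.Icc (s k i) i, ‖x0 (j + 1) - x0 j‖ ^ 2))
        ≤ ∑ k, c k * (8 * Lg k ^ 2)
          * ((T : ℝ) * ∑ j ∈ Finset.Icc (s k i) i, ‖x0 (j + 1) - x0 j‖ ^ 2) := by
      intro i _
      apply Finset.sum_le_sum_of_subset_of_nonneg (Finset.subset_univ _)
      intro k _ _
      have h1 : (0:ℝ) ≤ ∑ j ∈ Finset.Icc (s k i) i, ‖x0 (j + 1) - x0 j‖ ^ 2 :=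
        Finset.sum_nonneg fun j _ => ha0 j
      have := hW0 k
      positivity
    refine le_trans (Finset.sum_le_sum hext) ?_
    -- swap and count
    rw [Finset.sum_comm]
    have hswap : ∑ i ∈ Finset.Icc 1 t, ∑ k,
        (T : ℝ) ^ 2 * (c k * (8 * Lg k ^ 2)) * ‖x0 (i + 1) - x0 i‖ ^ 2
        = ∑ k, ∑ i ∈ Finset.Icc 1 t,
          (T : ℝ) ^ 2 * (c k * (8 * Lg k ^ 2)) * ‖x0 (i + 1) - x0 i‖ ^ 2 :=
      Finset.sum_comm
    rw [hswap]
    apply Finset.sum_le_sum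
    intro k _
    -- per-block counting
    have hinner : ∀ i ∈ Finset.Icc 1 t,
        (∑ j ∈ Finset.Icc (s k i) i, ‖x0 (j + 1) - x0 j‖ ^ 2)
          = ∑ j ∈ Finset.Icc 1 t,
              (if j ∈ Finset.Icc (s k i) i then ‖x0 (j + 1) - x0 j‖ ^ 2 else 0) := by
      intro i hii
      rw [Finset.sum_ite_mem]
      congr 1
      rw [eq_comm, Finset.inter_eq_right]
      intro j hj
      rw [Finset.mem_Icc] at hii
      rw [Finset.mem_Icc] at hj ⊢
      have := hs1 k i hii.1
      omega
    have hcnt : ∑ i ∈ Finset.Icc 1 t, c k * (8 * Lg k ^ 2)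
          * ((T : ℝ) * ∑ j ∈ Finset.Icc (s k i) i, ‖x0 (j + 1) - x0 j‖ ^ 2)
        = c k * (8 * Lg k ^ 2) * (T : ℝ)
          * ∑ i ∈ Finset.Icc 1 t, ∑ j ∈ Finset.Icc 1 t,
              (if j ∈ Finset.Icc (s k i) i then ‖x0 (j + 1) - x0 j‖ ^ 2 else 0) := by
      rw [Finset.mul_sum]
      refine Finset.sum_congr rfl fun i hii => ?_
      rw [hinner i hii]
      ring
    rw [hcnt, Finset.sum_comm]
    have hjbound : ∀ j ∈ Finset.Icc 1 t,
        (∑ i ∈ Finset.Icc 1 t,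
          (if j ∈ Finset.Icc (s k i) i then ‖x0 (j + 1) - x0 j‖ ^ 2 else 0))
        ≤ (T : ℝ) * ‖x0 (j + 1) - x0 j‖ ^ 2 := by
      intro j _
      rw [← Finset.sum_filter, Finset.sum_const, nsmul_eq_mul]
      have hsubs : (Finset.Icc 1 t).filter (fun i => j ∈ Finset.Icc (s k i) i)
          ⊆ Finset.Icc j (j + T - 1) := by
        intro i hifil
        rw [Finset.mem_filter, Finset.mem_Icc, Finset.mem_Icc] at hifil
        rw [Finset.mem_Icc]
        have h5 := hs5 k i hifil.1.1
        omega
      have hcard : (((Finset.Icc 1 t).filter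
            (fun i => j ∈ Finset.Icc (s k i) i)).card : ℝ) ≤ (T : ℝ) := by
        have h1 := Finset.card_le_card hsubs
        rw [Nat.card_Icc] at h1
        exact_mod_cast le_trans h1 (by omega : j + T - 1 + 1 - j ≤ T)
      exact mul_le_mul_of_nonneg_right hcard (ha0 j)
    calc c k * (8 * Lg k ^ 2) * (T : ℝ)
          * ∑ j ∈ Finset.Icc 1 t, ∑ i ∈ Finset.Icc 1 t,
              (if j ∈ Finset.Icc (s k i) i then ‖x0 (j + 1) - x0 j‖ ^ 2 else 0)
        ≤ c k * (8 * Lg k ^ 2) * (T : ℝ)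
          * ∑ j ∈ Finset.Icc 1 t, (T : ℝ) * ‖x0 (j + 1) - x0 j‖ ^ 2 := by
          apply mul_le_mul_of_nonneg_left (Finset.sum_le_sum hjbound)
          have := hW0 k; have : (0:ℝ) ≤ (T:ℝ) := Nat.cast_nonneg T
          positivity
      _ = ∑ i ∈ Finset.Icc 1 t,
            (T : ℝ) ^ 2 * (c k * (8 * Lg k ^ 2)) * ‖x0 (i + 1) - x0 i‖ ^ 2 := by
          rw [Finset.mul_sum]
          refine Finset.sum_congr rfl fun i _ => ?_
          ring
  -- assemble everything
  have hsplit1 : ∑ i ∈ Finset.Icc 1 t,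
        (- (∑ k, α k * ‖x (i + 1) k - x i k‖ ^ 2)
         - (∑ k, ρ k / 2 * ‖x0 (i + 1) - x0 i‖ ^ 2)
         + ∑ k ∈ C (i + 1), c k * (8 * Lg k ^ 2)
            * ((T : ℝ) * ∑ j ∈ Finset.Icc (s k i) i, ‖x0 (j + 1) - x0 j‖ ^ 2))
      = - (∑ i ∈ Finset.Icc 1 t, ∑ k, α k * ‖x (i + 1) k - x i k‖ ^ 2)
        - (∑ i ∈ Finset.Icc 1 t, ∑ k, ρ k / 2 * ‖x0 (i + 1) - x0 i‖ ^ 2)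
        + ∑ i ∈ Finset.Icc 1 t, (∑ k ∈ C (i + 1), c k * (8 * Lg k ^ 2)
            * ((T : ℝ) * ∑ j ∈ Finset.Icc (s k i) i, ‖x0 (j + 1) - x0 j‖ ^ 2)) := by
    rw [Finset.sum_add_distrib, Finset.sum_sub_distrib, Finset.sum_neg_distrib]
  have hsplit2 : ∑ i ∈ Finset.Icc 1 t, ∑ k,
        (ρ k / 2 - (T : ℝ) ^ 2 * ((4 * Lg k / ρ k ^ 2 + 1 / ρ k) * (8 * Lg k ^ 2)))
          * ‖x0 (i + 1) - x0 i‖ ^ 2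
      = (∑ i ∈ Finset.Icc 1 t, ∑ k, ρ k / 2 * ‖x0 (i + 1) - x0 i‖ ^ 2)
        - ∑ i ∈ Finset.Icc 1 t, ∑ k,
            (T : ℝ) ^ 2 * (c k * (8 * Lg k ^ 2)) * ‖x0 (i + 1) - x0 i‖ ^ 2 := by
    rw [← Finset.sum_sub_distrib]
    refine Finset.sum_congr rfl fun i _ => ?_
    rw [← Finset.sum_sub_distrib]
    refine Finset.sum_congr rfl fun k _ => ?_
    simp only [hcdef]
    ring
  rw [hsplit1] at hsumstep
  rw [hsplit2]
  simp only [hαdef] at hsumstep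
  linarith [hsumstep, hcount]
end

section
/- (Lemma 4.1) Let the sequences {x_k^t}, {x_0^t}, {y^t} be generated by the flexible ADMM (Algorithm 4) for the sharing problem, with ∇ℓ Lipschitz continuous with constant L > 0 and an arbitrary choice of index sets C^{t+1}. Then for every t ≥ 1: (i) ∇ℓ(x_0^{t+1}) = −y^{t+1}; and (ii) L² ‖x_0^{t+1} − x_0^t‖² ≥ ‖y^{t+1} − y^t‖². -/
open Filter
open scoped RealInnerProductSpace BigOperators

section AuxGrad
variable {E : Type*} [NormedAddCommGroup E] [InnerProductSpace ℝ E] [CompleteSpace E]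

lemma aux_min_grad_zero (l : E → ℝ) (l' : E → E) (hgrad : ∀ z, HasGradientAt l (l' z) z)
    (ρ : ℝ) (y s xs : E)
    (hmin : ∀ z, l xs + ⟪y, xs⟫ + ρ / 2 * ‖xs - s‖ ^ 2
      ≤ l z + ⟪y, z⟫ + ρ / 2 * ‖z - s‖ ^ 2) :
    l' xs + y + ρ • (xs - s) = 0 := by
  have h1 : HasFDerivAt l (InnerProductSpace.toDual ℝ E (l' xs)) xs := (hgrad xs).hasFDerivAt
  have h2 : HasFDerivAt (fun z : E => ⟪y, z⟫) (innerSL ℝ y) xs := (innerSL ℝ y).hasFDerivAt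
  have h3 : HasFDerivAt (fun z : E => z - s) (ContinuousLinearMap.id ℝ E) xs :=
    (hasFDerivAt_id xs).sub_const s
  have h4 := h3.inner ℝ h3
  have h5 : HasFDerivAt (fun z : E => ρ / 2 * ‖z - s‖ ^ 2)
      ((ρ / 2) • ((fderivInnerCLM ℝ (xs - s, xs - s)).comp
        ((ContinuousLinearMap.id ℝ E).prod (ContinuousLinearMap.id ℝ E)))) xs := by
    have := h4.const_mul (ρ / 2)
    refine this.congr_of_eventuallyEq (Eventually.of_forall fun z => ?_)
    simp [real_inner_self_eq_norm_sq]
  have hF := (h1.add h2).add h5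
  have hloc : IsLocalMin (fun z : E => l z + ⟪y, z⟫ + ρ / 2 * ‖z - s‖ ^ 2) xs :=
    Eventually.of_forall hmin
  have h0 := hloc.hasFDerivAt_eq_zero hF
  have key : InnerProductSpace.toDual ℝ E (l' xs + y + ρ • (xs - s)) = 0 := by
    rw [← h0]; ext w
    simp [inner_add_left, inner_sub_left, inner_sub_right, real_inner_smul_left,
      fderivInnerCLM_apply, real_inner_comm]
    ring
  exact (InnerProductSpace.toDual ℝ E).injective (key.trans (map_zero _).symm)

end AuxGrad

/-- Augmented Lagrangian for the reformulated sharing problem: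
`L({x_k}, x_0; y) = Σ_k g_k(x_k) + ℓ(x_0) + ⟨x_0 − Σ_k A_k x_k, y⟩
  + (ρ/2)‖x_0 − Σ_k A_k x_k‖²`. -/
noncomputable def augLs {M K : ℕ} {Nv : Fin K → ℕ}
    (g : ∀ k : Fin K, EuclideanSpace ℝ (Fin (Nv k)) → ℝ)
    (l : EuclideanSpace ℝ (Fin M) → ℝ) (ρ : ℝ)
    (A : ∀ k : Fin K, EuclideanSpace ℝ (Fin (Nv k)) →L[ℝ] EuclideanSpace ℝ (Fin M))
    (xk : ∀ k : Fin K, EuclideanSpace ℝ (Fin (Nv k)))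
    (x0 y : EuclideanSpace ℝ (Fin M)) : ℝ :=
  (∑ k, g k (xk k)) + l x0 + ⟪x0 - ∑ k, A k (xk k), y⟫
    + ρ / 2 * ‖x0 - ∑ k, A k (xk k)‖ ^ 2

/-- **Lemma 4.1.**  For the flexible ADMM (Algorithm 4) on the sharing problem, for every
`t ≥ 1`: (i) `∇ℓ(x_0^{t+1}) = −y^{t+1}`, and (ii) `L²‖x_0^{t+1} − x_0^t‖² ≥ ‖y^{t+1} − y^t‖²`. -/
theorem lemma4_1
    {M K : ℕ} {Nv : Fin K → ℕ} (hK : 1 ≤ K)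
    (g : ∀ k : Fin K, EuclideanSpace ℝ (Fin (Nv k)) → ℝ)
    (l : EuclideanSpace ℝ (Fin M) → ℝ)
    (l' : EuclideanSpace ℝ (Fin M) → EuclideanSpace ℝ (Fin M))
    (A : ∀ k : Fin K, EuclideanSpace ℝ (Fin (Nv k)) →L[ℝ] EuclideanSpace ℝ (Fin M))
    (X : ∀ k : Fin K, Set (EuclideanSpace ℝ (Fin (Nv k))))
    (Lc ρ : ℝ)
    (x : ℕ → ∀ k : Fin K, EuclideanSpace ℝ (Fin (Nv k)))
    (x0 y : ℕ → EuclideanSpace ℝ (Fin M))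
    (C : ℕ → Finset (Option (Fin K)))
    -- Assumption C1
    (hgrad : ∀ z, HasGradientAt l (l' z) z)
    (hLpos : 0 < Lc)
    (hLip : ∀ u v, ‖l' u - l' v‖ ≤ Lc * ‖u - v‖)
    (hXne : ∀ k, (X k).Nonempty) (hXcl : ∀ k, IsClosed (X k))
    (hXcv : ∀ k, Convex ℝ (X k))
    (hA : ∀ k, Function.Injective (A k))
    (hρ : 0 < ρ)
    -- Algorithm 4
    (hC1 : C 1 = Finset.univ)
    (hxupd : ∀ (t : ℕ) (k : Fin K),
      (some k ∈ C (t + 1) → x (t + 1) k ∈ X k ∧ ∀ z ∈ X k,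
        g k (x (t + 1) k) - ⟪y t, A k (x (t + 1) k)⟫
            + ρ / 2 * ‖x0 t - (∑ j ∈ Finset.univ.filter (fun j => j < k), A j (x (t + 1) j))
                - (∑ j ∈ Finset.univ.filter (fun j => k < j), A j (x t j))
                - A k (x (t + 1) k)‖ ^ 2
          ≤ g k z - ⟪y t, A k z⟫
            + ρ / 2 * ‖x0 t - (∑ j ∈ Finset.univ.filter (fun j => j < k), A j (x (t + 1) j))
                - (∑ j ∈ Finset.univ.filter (fun j => k < j), A j (x t j))
                - A k z‖ ^ 2) ∧
      (some k ∉ C (t + 1) → x (t + 1) k = x t k))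
    (hx0upd : ∀ t : ℕ,
      (none ∈ C (t + 1) → ∀ z : EuclideanSpace ℝ (Fin M),
        l (x0 (t + 1)) + ⟪y t, x0 (t + 1)⟫
            + ρ / 2 * ‖x0 (t + 1) - ∑ k, A k (x (t + 1) k)‖ ^ 2
          ≤ l z + ⟪y t, z⟫ + ρ / 2 * ‖z - ∑ k, A k (x (t + 1) k)‖ ^ 2) ∧
      (none ∉ C (t + 1) → x0 (t + 1) = x0 t))
    (hyupd : ∀ t : ℕ,
      (none ∈ C (t + 1) →
        y (t + 1) = y t + ρ • (x0 (t + 1) - ∑ k, A k (x (t + 1) k))) ∧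
      (none ∉ C (t + 1) → y (t + 1) = y t)) :
    ∀ t : ℕ, 1 ≤ t →
      l' (x0 (t + 1)) = -(y (t + 1)) ∧
      ‖y (t + 1) - y t‖ ^ 2 ≤ Lc ^ 2 * ‖x0 (t + 1) - x0 t‖ ^ 2 := by
  
  have key : ∀ t : ℕ, none ∈ C (t + 1) → l' (x0 (t + 1)) = -(y (t + 1)) := by
    intro t ht
    have hmin := (hx0upd t).1 ht
    have hz := aux_min_grad_zero l l' hgrad ρ (y t) (∑ k, A k (x (t + 1) k)) (x0 (t + 1)) hmin
    rw [(hyupd t).1 ht]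
    rw [add_assoc] at hz
    exact eq_neg_of_add_eq_zero_left hz
  have main : ∀ t : ℕ, 1 ≤ t → l' (x0 t) = -(y t) := by
    intro t ht
    induction t, ht using Nat.le_induction with
    | base => exact key 0 (by rw [hC1]; exact Finset.mem_univ _)
    | succ t ht ih =>
      by_cases h : none ∈ C (t + 1)
      · exact key t h
      · rw [(hx0upd t).2 h, (hyupd t).2 h]; exact ih
  intro t ht
  refine ⟨main (t + 1) (by omega), ?_⟩
  have h1 := main t ht
  have h2 := main (t + 1) (by omega)
  have hnorm : ‖y (t + 1) - y t‖ ≤ Lc * ‖x0 (t + 1) - x0 t‖ := by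
    have hl := hLip (x0 (t + 1)) (x0 t)
    rw [h1, h2] at hl
    calc ‖y (t + 1) - y t‖ = ‖-(y (t + 1)) - -(y t)‖ := by rw [← norm_neg]; congr 1; abel
    _ ≤ Lc * ‖x0 (t + 1) - x0 t‖ := hl
  calc ‖y (t + 1) - y t‖ ^ 2 ≤ (Lc * ‖x0 (t + 1) - x0 t‖) ^ 2 :=
        pow_le_pow_left₀ (norm_nonneg _) hnorm 2
  _ = Lc ^ 2 * ‖x0 (t + 1) - x0 t‖ ^ 2 := by ring
end
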